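/- arXiv:2506.06109 — 2 statements merged into one kernel-verified Lean document; each statement's English description precedes it below -/
import Mathlib

section
/- Let M = M[P,Q] be a connected lattice path matroid on [n]. Let A = [a] be an initial connected flat of M and let B = [b, n] be a final connected flat of M. Then (A, B) is a modular pair if and only if (A, B) is not mixed. -/
/-!
Every rank involved is computed from the interval presentation: an independent subset of `X`
is matched into the intervals meeting `X`, which bounds its size, and an explicit system of
distinct representatives attains the bound. This gives `r([a]) = a₂` and `r([b, n]) = r - b₂`.
If `a < b` the flats are disjoint, and `r([a] ∪ [b, n]) = a₂ + r - b₂` when `a₂ ≤ b₂`, while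
`a₂ > b₂` makes the pair mixed and the union, of rank at most `r`, too small. If `b ≤ a` the
union is `[n]`, of rank `r`, and modularity asks `r([b, a]) = a₂ - b₂`; this holds exactly when
the pair is not mixed, since a mixed pair has `|[b, a]| < a₂ - b₂`.
-/

open Set Matroid

namespace Paper

variable {α : Type*} {β : Type*}

/-- The rank of a set in a matroid: the largest cardinality of an independent subset. -/
noncomputable def rnk (M : Matroid α) (X : Set α) : ℕ :=
  sSup {n | ∃ I, M.Indep I ∧ I ⊆ X ∧ I.ncard = n}

/-- A coloop: an element contained in every base. -/
def IsColoop (M : Matroid α) (e : α) : Prop := ∀ B, M.IsBase B → e ∈ B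

/-- A cyclic flat: a flat whose restriction has no coloops. -/
def CyclicFlat (M : Matroid α) (F : Set α) : Prop :=
  M.IsFlat F ∧ ∀ e ∈ F, ¬ IsColoop (M ↾ F) e

/-- A modular pair of sets. -/
def ModularPair (M : Matroid α) (X Y : Set α) : Prop :=
  rnk M X + rnk M Y = rnk M (X ∪ Y) + rnk M (X ∩ Y)

/-- Two matroids have the same configuration: there is an inclusion-order isomorphism
between their collections of cyclic flats preserving size and rank. -/
def SameConfig (M : Matroid α) (N : Matroid β) : Prop :=
  ∃ φ : {F : Set α // CyclicFlat M F} ≃o {F : Set β // CyclicFlat N F},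
    ∀ F : {F : Set α // CyclicFlat M F},
      (φ F : Set β).ncard = (F : Set α).ncard ∧ rnk N (φ F : Set β) = rnk M (F : Set α)

/-- Matroid isomorphism: a bijection between ground sets mapping independent sets
onto independent sets. -/
def IsIso (M : Matroid α) (N : Matroid β) : Prop :=
  ∃ f : α → β, Set.BijOn f M.E N.E ∧ ∀ I ⊆ M.E, (M.Indep I ↔ N.Indep (f '' I))

/-- A matroid is configuration unique if every (finite) matroid with the same
configuration is isomorphic to it. -/
def ConfigUnique (M : Matroid α) : Prop :=
  ∀ {γ : Type*} (N : Matroid γ), N.Finite → SameConfig M N → IsIso M N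

/-- A circuit: a minimal dependent set. -/
def IsCircuit (M : Matroid α) (C : Set α) : Prop :=
  C ⊆ M.E ∧ ¬ M.Indep C ∧ ∀ x ∈ C, M.Indep (C \ {x})

/-- A matroid is connected if its ground set is nonempty and any two distinct
elements lie in a common circuit. -/
def MatConnected (M : Matroid α) : Prop :=
  M.E.Nonempty ∧ ∀ ⦃e f⦄, e ∈ M.E → f ∈ M.E → e ≠ f → ∃ C, IsCircuit M C ∧ e ∈ C ∧ f ∈ C

/-- The connected component of `e`: all elements sharing a circuit with `e` (plus `e`). -/
def component (M : Matroid α) (e : α) : Set α :=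
  {f ∈ M.E | e = f ∨ ∃ C, IsCircuit M C ∧ e ∈ C ∧ f ∈ C}

/-- `(A 1, …, A r)` is a presentation of the transversal matroid `M`: the independent
sets of `M` are exactly the partial transversals. -/
def IsPresentation (M : Matroid α) (r : ℕ) (A : ℕ → Set α) : Prop :=
  (∀ i ∈ Set.Icc 1 r, A i ⊆ M.E) ∧
  ∀ I : Set α, M.Indep I ↔ I ⊆ M.E ∧ ∃ φ : α → ℕ, Set.InjOn φ I ∧
    ∀ x ∈ I, φ x ∈ Set.Icc 1 r ∧ x ∈ A (φ x)

/-- A transversal matroid. -/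
def IsTransversalMatroid (M : Matroid α) : Prop := ∃ r A, IsPresentation M r A

/-- A fundamental (principal) transversal matroid: one with a presentation in which each
set has an element belonging to no other set. -/
def IsFundamental (M : Matroid α) : Prop :=
  ∃ (r : ℕ) (A : ℕ → Set α), IsPresentation M r A ∧
    ∀ i ∈ Set.Icc 1 r, ∃ e ∈ A i, ∀ j ∈ Set.Icc 1 r, j ≠ i → e ∉ A j

/-- `M` is the lattice path matroid `M[P,Q]` on `[n]` determined by the positions
`l 1 < ⋯ < l r` of the north steps of the upper path and `u 1 < ⋯ < u r` of those of the
lower path: the transversal matroid on `[n]` presented by the intervals `N i = [l i, u i]`. -/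
def IsLPM (n r : ℕ) (l u : ℕ → ℕ) (M : Matroid ℕ) : Prop :=
  1 ≤ r ∧ r ≤ n ∧
  StrictMonoOn l (Set.Icc 1 r) ∧ StrictMonoOn u (Set.Icc 1 r) ∧
  (∀ i ∈ Set.Icc 1 r, l i ∈ Set.Icc 1 n ∧ u i ∈ Set.Icc 1 n ∧ l i ≤ u i) ∧
  M.E = Set.Icc 1 n ∧
  IsPresentation M r (fun i => Set.Icc (l i) (u i))

/-- A lattice path matroid: any matroid isomorphic to some `M[P,Q]`. -/
def IsLatticePathMatroid (M : Matroid α) : Prop :=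
  ∃ (n r : ℕ) (l u : ℕ → ℕ) (M₀ : Matroid ℕ), IsLPM n r l u M₀ ∧ IsIso M₀ M

/-- `[a] = {1, …, a}` is an initial connected flat: `a ∉ {l 1, …, l r}` and
`a + 1 ∈ {l 1, …, l r}`. -/
def InitialFlat (r : ℕ) (l : ℕ → ℕ) (a : ℕ) : Prop :=
  (∀ i ∈ Set.Icc 1 r, l i ≠ a) ∧ ∃ i ∈ Set.Icc 1 r, l i = a + 1

/-- `[b, n]` is a final connected flat: `b - 1 ∈ {u 1, …, u r}` and
`b ∉ {u 1, …, u r}`. -/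
def FinalFlat (r : ℕ) (u : ℕ → ℕ) (b : ℕ) : Prop :=
  (∃ i ∈ Set.Icc 1 r, u i = b - 1) ∧ ∀ i ∈ Set.Icc 1 r, u i ≠ b

/-- The pair `([a], [b,n])` is mixed: `a₁ < b₁` and `a₂ > b₂`, where
`a₂ = #{i : l i ≤ a}`, `a₁ = a - a₂`, `b₂ = #{i : u i ≤ b-1}`, `b₁ = b - 1 - b₂`. -/
def Mixed (r : ℕ) (l u : ℕ → ℕ) (a b : ℕ) : Prop :=
  a - {i ∈ Set.Icc 1 r | l i ≤ a}.ncard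
      < (b - 1) - {i ∈ Set.Icc 1 r | u i ≤ b - 1}.ncard ∧
  {i ∈ Set.Icc 1 r | u i ≤ b - 1}.ncard < {i ∈ Set.Icc 1 r | l i ≤ a}.ncard

/-- A set of integers is an interval (order-convex set). -/
def IsInterval (S : Set ℕ) : Prop :=
  ∀ x ∈ S, ∀ y ∈ S, ∀ z, x ≤ z → z ≤ y → z ∈ S

/-- `R` is the rook matroid `R[P,Q]` on `[n]`: the transversal matroid presented by
`A i = {i} ∪ {r + j : l i - i + 1 ≤ j ≤ u i - i}`. -/
def IsRook (n r : ℕ) (l u : ℕ → ℕ) (R : Matroid ℕ) : Prop :=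
  R.E = Set.Icc 1 n ∧
  IsPresentation R r
    (fun i => insert i ((fun j => r + j) '' Set.Icc (l i - i + 1) (u i - i)))

/-- `M = N +_X e` is the principal extension of `N` adding `e` freely to `X`. -/
def IsPrincipalExt (N : Matroid α) (X : Set α) (e : α) (M : Matroid α) : Prop :=
  M.E = insert e N.E ∧ ∀ Z ⊆ N.E,
    rnk M Z = rnk N Z ∧
    (X ⊆ N.closure Z → rnk M (insert e Z) = rnk N Z) ∧
    (¬ X ⊆ N.closure Z → rnk M (insert e Z) = rnk N Z + 1)

lemma rnk_le_of_forall_indep {M : Matroid α} {X : Set α} {k : ℕ}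
    (hk : ∀ I, M.Indep I → I ⊆ X → I.ncard ≤ k) : rnk M X ≤ k :=
  csSup_le ⟨0, ∅, M.empty_indep, empty_subset X, ncard_empty α⟩
    (by rintro _ ⟨I, hI, hIX, rfl⟩; exact hk I hI hIX)

lemma rnk_eq_of_forall_indep {M : Matroid α} {X : Set α} {k : ℕ}
    (hk : ∀ I, M.Indep I → I ⊆ X → I.ncard ≤ k) (hI : ∃ I, M.Indep I ∧ I ⊆ X ∧ I.ncard = k) :
    rnk M X = k :=
  (rnk_le_of_forall_indep hk).antisymm
    (le_csSup ⟨k, by rintro _ ⟨I, hI, hIX, rfl⟩; exact hk I hI hIX⟩ hI)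

lemma rnk_le_ncard (M : Matroid α) {X : Set α} (hX : X.Finite) : rnk M X ≤ X.ncard :=
  rnk_le_of_forall_indep fun _ _ hIX => ncard_le_ncard hIX hX

namespace IsPresentation

variable {M : Matroid α} {r : ℕ} {A : ℕ → Set α} {X : Set α} {T : Set ℕ}

lemma ncard_le_of_indep (hM : IsPresentation M r A) (hT : T.Finite)
    (hXT : ∀ j ∈ Icc 1 r, (A j ∩ X).Nonempty → j ∈ T) {I : Set α} (hI : M.Indep I)
    (hIX : I ⊆ X) : I.ncard ≤ T.ncard := by
  obtain ⟨-, φ, hφ, hφA⟩ := (hM.2 I).1 hI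
  rw [← hφ.ncard_image]
  refine ncard_le_ncard ?_ hT
  rintro _ ⟨x, hx, rfl⟩
  exact hXT _ (hφA x hx).1 ⟨x, (hφA x hx).2, hIX hx⟩

lemma rnk_le (hM : IsPresentation M r A) (hT : T.Finite)
    (hXT : ∀ j ∈ Icc 1 r, (A j ∩ X).Nonempty → j ∈ T) : rnk M X ≤ T.ncard :=
  rnk_le_of_forall_indep fun _ hI hIX => hM.ncard_le_of_indep hT hXT hI hIX

lemma indep_image (hM : IsPresentation M r A) (hT : T ⊆ Icc 1 r) {m : ℕ → α}
    (hm : InjOn m T) (hmA : ∀ i ∈ T, m i ∈ A i) : M.Indep (m '' T) := by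
  refine (hM.2 _).2 ⟨?_, Function.invFunOn m T, ?_, ?_⟩
  · rintro _ ⟨i, hi, rfl⟩
    exact hM.1 i (hT hi) (hmA i hi)
  · rintro _ ⟨i, hi, rfl⟩ _ ⟨j, hj, rfl⟩ hij
    rw [hm.leftInvOn_invFunOn hi, hm.leftInvOn_invFunOn hj] at hij
    rw [hij]
  · rintro _ ⟨i, hi, rfl⟩
    rw [hm.leftInvOn_invFunOn hi]
    exact ⟨hT hi, hmA i hi⟩

lemma rnk_eq (hM : IsPresentation M r A) (hT : T ⊆ Icc 1 r)
    (hXT : ∀ j ∈ Icc 1 r, (A j ∩ X).Nonempty → j ∈ T) {m : ℕ → α} (hm : InjOn m T)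
    (hmA : ∀ i ∈ T, m i ∈ A i ∩ X) : rnk M X = T.ncard := by
  refine rnk_eq_of_forall_indep (fun _ hI hIX => hM.ncard_le_of_indep
    ((finite_Icc 1 r).subset hT) hXT hI hIX) ⟨m '' T, ?_, ?_, hm.ncard_image⟩
  · exact hM.indep_image hT hm fun i hi => (hmA i hi).1
  · rintro _ ⟨i, hi, rfl⟩
    exact (hmA i hi).2

end IsPresentation

end Paper

lemma StrictMonoOn.add_sub_le {f : ℕ → ℕ} {p q : ℕ} (hf : StrictMonoOn f (Icc p q)) {i j : ℕ}
    (hpi : p ≤ i) (hij : i ≤ j) (hjq : j ≤ q) : f i + (j - i) ≤ f j := by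
  induction j, hij using Nat.le_induction with
  | base => simp
  | succ k hik ih =>
    have hstep := hf ⟨hpi.trans hik, by omega⟩ ⟨by omega, hjq⟩ (Nat.lt_succ_self k)
    have := ih (by omega)
    omega

lemma StrictMonoOn.self_le_apply {f : ℕ → ℕ} {r : ℕ} (hf : StrictMonoOn f (Icc 1 r))
    (hf1 : 1 ≤ f 1) {i : ℕ} (hi : i ∈ Icc 1 r) : i ≤ f i := by
  have := hf.add_sub_le (i := 1) le_rfl hi.1 hi.2
  omega

namespace Paper

/-- `countLE r l a` and `countLE r u (b - 1)` are the numbers `a₂` and `b₂` of the paper. -/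
noncomputable def countLE (r : ℕ) (f : ℕ → ℕ) (c : ℕ) : ℕ := {i ∈ Icc 1 r | f i ≤ c}.ncard

lemma mixed_iff {r : ℕ} {l u : ℕ → ℕ} {a b : ℕ} :
    Mixed r l u a b ↔ a - countLE r l a < b - 1 - countLE r u (b - 1) ∧
      countLE r u (b - 1) < countLE r l a :=
  Iff.rfl

lemma countLE_le (r : ℕ) (f : ℕ → ℕ) (c : ℕ) : countLE r f c ≤ r := by
  have := ncard_le_ncard (sep_subset (Icc 1 r) (f · ≤ c)) (finite_Icc 1 r)
  rwa [ncard_Icc_nat, Nat.add_sub_cancel] at this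

lemma countLE_le_of_self_le {r : ℕ} {f : ℕ → ℕ} (hf : ∀ i ∈ Icc 1 r, i ≤ f i) (c : ℕ) :
    countLE r f c ≤ c := by
  have hsub : {i ∈ Icc 1 r | f i ≤ c} ⊆ Icc 1 c := fun i ⟨hi, hic⟩ => ⟨hi.1, (hf i hi).trans hic⟩
  have := ncard_le_ncard hsub (finite_Icc 1 c)
  rwa [ncard_Icc_nat, Nat.add_sub_cancel] at this

lemma countLE_mono {r : ℕ} {f g : ℕ → ℕ} {c d : ℕ}
    (hfg : ∀ i ∈ Icc 1 r, g i ≤ c → f i ≤ d) : countLE r g c ≤ countLE r f d :=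
  ncard_le_ncard (fun i ⟨hi, hic⟩ => ⟨hi, hfg i hi hic⟩)
    ((finite_Icc 1 r).subset (sep_subset _ _))

lemma apply_le_iff_le_countLE {r : ℕ} {f : ℕ → ℕ} (hf : MonotoneOn f (Icc 1 r))
    (c : ℕ) {i : ℕ} (hi : i ∈ Icc 1 r) : f i ≤ c ↔ i ≤ countLE r f c := by
  constructor
  · intro hfi
    have hsub : Icc 1 i ⊆ {j ∈ Icc 1 r | f j ≤ c} := fun j hj =>
      ⟨⟨hj.1, hj.2.trans hi.2⟩, (hf ⟨hj.1, hj.2.trans hi.2⟩ hi hj.2).trans hfi⟩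
    have := ncard_le_ncard hsub ((finite_Icc 1 r).subset (sep_subset _ _))
    rwa [ncard_Icc_nat, Nat.add_sub_cancel] at this
  · intro hic
    by_contra hfi
    have hsub : {j ∈ Icc 1 r | f j ≤ c} ⊆ Icc 1 (i - 1) := fun j ⟨hj, hfj⟩ =>
      ⟨hj.1, by
        by_contra hji
        exact hfi ((hf hi hj (by omega)).trans hfj)⟩
    have := ncard_le_ncard hsub (finite_Icc _ _)
    rw [ncard_Icc_nat] at this
    have hcount : countLE r f c ≤ i - 1 := this
    have := hi.1
    omega

namespace IsLPM

variable {n r : ℕ} {l u : ℕ → ℕ} {M : Matroid ℕ}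

lemma self_le_l (h : IsLPM n r l u M) {i : ℕ} (hi : i ∈ Icc 1 r) : i ≤ l i :=
  h.2.2.1.self_le_apply (h.2.2.2.2.1 1 ⟨le_rfl, h.1⟩).1.1 hi

lemma self_le_u (h : IsLPM n r l u M) {i : ℕ} (hi : i ∈ Icc 1 r) : i ≤ u i :=
  h.2.2.2.1.self_le_apply (h.2.2.2.2.1 1 ⟨le_rfl, h.1⟩).2.1.1 hi

lemma l_le_iff (h : IsLPM n r l u M) (c : ℕ) {i : ℕ} (hi : i ∈ Icc 1 r) :
    l i ≤ c ↔ i ≤ countLE r l c :=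
  apply_le_iff_le_countLE h.2.2.1.monotoneOn c hi

lemma le_u_iff (h : IsLPM n r l u M) (b : ℕ) {i : ℕ} (hi : i ∈ Icc 1 r) :
    b ≤ u i ↔ countLE r u (b - 1) < i := by
  have hu := apply_le_iff_le_countLE h.2.2.2.1.monotoneOn (b - 1) hi
  have := h.self_le_u hi
  have := hi.1
  omega

lemma rnk_le (h : IsLPM n r l u M) (X : Set ℕ) : rnk M X ≤ r := by
  have := h.2.2.2.2.2.2.rnk_le (X := X) (finite_Icc 1 r) fun j hj _ => hj
  rwa [ncard_Icc_nat, Nat.add_sub_cancel] at this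

lemma rnk_Icc_one (h : IsLPM n r l u M) (c : ℕ) : rnk M (Icc 1 c) = countLE r l c := by
  obtain ⟨-, -, hl, -, hbd, -, hM⟩ := h
  refine hM.rnk_eq (sep_subset _ _) ?_ (hl.injOn.mono (sep_subset _ _)) ?_
  · rintro j hj ⟨x, hx, hxc⟩
    exact ⟨hj, hx.1.trans hxc.2⟩
  · rintro i ⟨hi, hic⟩
    exact ⟨⟨le_rfl, (hbd i hi).2.2⟩, (hbd i hi).1.1, hic⟩

lemma rnk_Icc (h : IsLPM n r l u M) (b : ℕ) : rnk M (Icc b n) = r - countLE r u (b - 1) := by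
  have hT : Icc (countLE r u (b - 1) + 1) r ⊆ Icc 1 r := Icc_subset_Icc_left (by omega)
  obtain ⟨-, -, -, hu, hbd, -, hM⟩ := id h
  refine (hM.rnk_eq hT ?_ (hu.injOn.mono hT) ?_).trans (by rw [ncard_Icc_nat]; omega)
  · rintro j hj ⟨x, hx, hxb⟩
    exact ⟨(h.le_u_iff b hj).1 (hxb.1.trans hx.2), hj.2⟩
  · intro i hi
    have hi' := hT hi
    exact ⟨⟨(hbd i hi').2.2, le_rfl⟩, (h.le_u_iff b hi').2 hi.1, (hbd i hi').2.1.2⟩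

lemma rnk_Icc_one_union_Icc (h : IsLPM n r l u M) {a b : ℕ} (hab : a < b)
    (hlu : countLE r l a ≤ countLE r u (b - 1)) :
    rnk M (Icc 1 a ∪ Icc b n) = countLE r l a + (r - countLE r u (b - 1)) := by
  set p := countLE r l a
  set q := countLE r u (b - 1)
  have hq := countLE_le r u (b - 1)
  have hT : Icc 1 p ∪ Icc (q + 1) r ⊆ Icc 1 r :=
    union_subset (Icc_subset_Icc_right (by omega)) (Icc_subset_Icc_left (by omega))
  have hdisj : Disjoint (Icc 1 p) (Icc (q + 1) r) :=
    disjoint_left.2 fun i hi hi' => by simp only [mem_Icc] at hi hi'; omega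
  obtain ⟨-, -, hl, hu, hbd, -, hM⟩ := id h
  have hm : StrictMonoOn (fun i => if i ≤ p then l i else u i) (Icc 1 p ∪ Icc (q + 1) r) := by
    intro i hi j hj hij
    have hi' := hT hi
    have hj' := hT hj
    by_cases hjp : j ≤ p
    · simp only [if_pos (hij.le.trans hjp), if_pos hjp]
      exact hl hi' hj' hij
    by_cases hip : i ≤ p
    · simp only [if_pos hip, if_neg hjp]
      have hlia := (h.l_le_iff a hi').2 hip
      have hqj : q < j := by rcases hj with hj | hj <;> simp only [mem_Icc] at hj <;> omega
      have hbuj := (h.le_u_iff b hj').2 hqj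
      omega
    · simp only [if_neg hip, if_neg hjp]
      exact hu hi' hj' hij
  refine (hM.rnk_eq hT ?_ hm.injOn ?_).trans ?_
  · rintro j hj ⟨x, hx, hxa | hxb⟩
    · exact Or.inl ⟨hj.1, (h.l_le_iff a hj).1 (hx.1.trans hxa.2)⟩
    · exact Or.inr ⟨(h.le_u_iff b hj).1 (hxb.1.trans hx.2), hj.2⟩
  · intro i hi
    have hi' := hT hi
    by_cases hip : i ≤ p
    · simp only [if_pos hip]
      exact ⟨⟨le_rfl, (hbd i hi').2.2⟩, Or.inl ⟨(hbd i hi').1.1, (h.l_le_iff a hi').2 hip⟩⟩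
    · simp only [if_neg hip]
      have hqi : q < i := by rcases hi with hi | hi <;> simp only [mem_Icc] at hi <;> omega
      exact ⟨⟨(hbd i hi').2.2, le_rfl⟩, Or.inr ⟨(h.le_u_iff b hi').2 hqi, (hbd i hi').2.1.2⟩⟩
  · rw [ncard_union_eq hdisj, ncard_Icc_nat, ncard_Icc_nat]
    omega

lemma rnk_Icc_of_add_le (h : IsLPM n r l u M) {a b : ℕ}
    (hba : b + countLE r l a ≤ a + countLE r u (b - 1) + 1) :
    rnk M (Icc b a) = countLE r l a - countLE r u (b - 1) := by
  set p := countLE r l a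
  set q := countLE r u (b - 1)
  have hT : Icc (q + 1) p ⊆ Icc 1 r := Icc_subset_Icc (by omega) (countLE_le r l a)
  obtain ⟨-, -, hl, hu, hbd, -, hM⟩ := id h
  -- representatives `b, b + 1, …` pushed right past `l i`; `hba` keeps them below `a`
  have hm : StrictMonoOn (fun i => max (l i) (b + (i - (q + 1)))) (Icc (q + 1) p) :=
    fun i hi j hj hij => max_lt_max (hl (hT hi) (hT hj) hij) (by simp only [mem_Icc] at hi; omega)
  refine (hM.rnk_eq hT ?_ hm.injOn ?_).trans (by rw [ncard_Icc_nat]; omega)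
  · rintro j hj ⟨x, hx, hxb⟩
    exact ⟨(h.le_u_iff b hj).1 (hxb.1.trans hx.2), (h.l_le_iff a hj).1 (hx.1.trans hxb.2)⟩
  · intro i hi
    have hq1 : q + 1 ∈ Icc 1 r := hT ⟨le_rfl, hi.1.trans hi.2⟩
    have hbu := (h.le_u_iff b hq1).2 (Nat.lt_succ_self q)
    have hgap := hu.add_sub_le hq1.1 hi.1 (hT hi).2
    have hla := (h.l_le_iff a (hT hi)).2 hi.2
    have hqi := hi.1
    have hip := hi.2
    exact ⟨⟨le_max_left _ _, max_le (hbd i (hT hi)).2.2 (by omega)⟩,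
      le_max_of_le_right (by omega), max_le hla (by omega)⟩

lemma modularPair_iff_of_lt (h : IsLPM n r l u M) {a b : ℕ} (hab : a < b) :
    ModularPair M (Icc 1 a) (Icc b n) ↔ ¬ Mixed r l u a b := by
  have hpa := countLE_le_of_self_le (fun _ => h.self_le_l) a
  have hqb := countLE_le_of_self_le (fun _ => h.self_le_u) (b - 1)
  have hinter : Icc 1 a ∩ Icc b n = ∅ := by
    ext x
    simp only [mem_inter_iff, mem_Icc, mem_empty_iff_false, iff_false]
    omega
  have hempty := rnk_le_ncard M (finite_empty (α := ℕ))
  rw [ncard_empty] at hempty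
  rw [ModularPair, mixed_iff, h.rnk_Icc_one, h.rnk_Icc, hinter]
  rcases le_or_gt (countLE r l a) (countLE r u (b - 1)) with hlu | hul
  · rw [h.rnk_Icc_one_union_Icc hab hlu]
    omega
  · have := h.rnk_le (Icc 1 a ∪ Icc b n)
    omega

lemma modularPair_iff_of_le (h : IsLPM n r l u M) {a b : ℕ} (hb : 1 ≤ b) (hba : b ≤ a)
    (han : a ≤ n) : ModularPair M (Icc 1 a) (Icc b n) ↔ ¬ Mixed r l u a b := by
  have hpa := countLE_le_of_self_le (fun _ => h.self_le_l) a
  have hqb := countLE_le_of_self_le (fun _ => h.self_le_u) (b - 1)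
  have hqr := countLE_le r u (b - 1)
  have hu0 : countLE r u (1 - 1) ≤ 0 := countLE_le_of_self_le (fun _ => h.self_le_u) 0
  have hqp : countLE r u (b - 1) ≤ countLE r l a :=
    countLE_mono fun i hi hui => ((h.2.2.2.2.1 i hi).2.2.trans hui).trans (by omega)
  have hunion : Icc 1 a ∪ Icc b n = Icc 1 n := by
    ext x
    simp only [mem_union, mem_Icc]
    omega
  have hinter : Icc 1 a ∩ Icc b n = Icc b a := by
    ext x
    simp only [mem_inter_iff, mem_Icc]
    omega
  rw [ModularPair, mixed_iff, h.rnk_Icc_one, h.rnk_Icc, hunion, hinter, h.rnk_Icc]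
  by_cases hfit : b + countLE r l a ≤ a + countLE r u (b - 1) + 1
  · rw [h.rnk_Icc_of_add_le hfit]
    omega
  · have := rnk_le_ncard M (finite_Icc b a)
    rw [ncard_Icc_nat] at this
    omega

end IsLPM

theorem statement7_general (n r : ℕ) (l u : ℕ → ℕ) (M : Matroid ℕ) (h : IsLPM n r l u M)
    (a b : ℕ)
    (hA : InitialFlat r l a) (hB : FinalFlat r u b) :
    ModularPair M (Set.Icc 1 a) (Set.Icc b n) ↔ ¬ Mixed r l u a b := by
  obtain ⟨-, -, -, -, hbd, -⟩ := id h
  obtain ⟨-, i, hi, hia⟩ := hA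
  obtain ⟨⟨j, hj, hjb⟩, -⟩ := hB
  have han : a < n := by have := (hbd i hi).1.2; omega
  have hb : 1 ≤ b := by have := (hbd j hj).2.1.1; omega
  rcases lt_or_ge a b with hab | hba
  · exact h.modularPair_iff_of_lt hab
  · exact h.modularPair_iff_of_le hb hba han.le

theorem statement7 (n r : ℕ) (l u : ℕ → ℕ) (M : Matroid ℕ) (h : IsLPM n r l u M)
    (hconn : MatConnected M) (a b : ℕ)
    (hA : InitialFlat r l a) (hB : FinalFlat r u b) :
    ModularPair M (Set.Icc 1 a) (Set.Icc b n) ↔ ¬ Mixed r l u a b :=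
  statement7_general n r l u M h a b hA hB

end Paper
end

section
/- If M is a fundamental transversal matroid, then every pair (X, Y) of cyclic flats of M is a modular pair. -/
open Set Matroid

namespace Paper

variable {α : Type*} {β : Type*}

/-
Choose in each `A i` an element `ε i` lying in no other `A j`. Every matching of an independent
set sends `ε i` to `i`, and `B = {ε i}` is independent. Call `Z` saturated if it contains `ε j`
whenever it meets `A j`. A cyclic flat `F` is saturated: given `x ∈ F ∩ A j`, some basis `B'` of
`F` misses `x` (as `x` is not a coloop of `M ↾ F`); if `ε j ∉ F = cl B'`, then `B' + ε j` is
independent, and rematching `x` to `A j` in place of `ε j` makes `B' + x` independent, a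
contradiction. A saturated set `Z` is spanned by `Z ∩ B` (an element outside `cl (Z ∩ B)` would
have to be matched to some `A j` whose `ε j` already occupies slot `j`), so `rnk Z = |Z ∩ B|`.
Saturated sets are closed under `∪` and `∩`, and `|· ∩ B|` is modular.
-/

theorem rnk_eq_ncard_of_isBasis' {M : Matroid α} {I X : Set α} (hI : M.IsBasis' I X)
    (hIfin : I.Finite) : rnk M X = I.ncard := by
  refine IsGreatest.csSup_eq ⟨⟨I, hI.indep, hI.subset, rfl⟩, ?_⟩
  rintro _ ⟨J, hJ, hJX, rfl⟩
  have hJI : J.encard ≤ I.encard := hI.encard_eq_eRk ▸ hJ.encard_le_eRk_of_subset hJX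
  rw [← hIfin.cast_ncard_eq] at hJI
  rw [← (finite_of_encard_le_coe hJI).cast_ncard_eq] at hJI
  exact_mod_cast hJI

theorem CyclicFlat.exists_isBasis_notMem {M : Matroid α} {F : Set α} (hF : CyclicFlat M F)
    {x : α} (hx : x ∈ F) : ∃ B, M.IsBasis B F ∧ x ∉ B := by
  have hnc := hF.2 x hx
  simp only [IsColoop, not_forall] at hnc
  obtain ⟨B, hB, hxB⟩ := hnc
  exact ⟨B, (isBase_restrict_iff'.1 hB).isBasis hF.1.subset_ground, hxB⟩

def IsSaturated (r : ℕ) (A : ℕ → Set α) (ε : ℕ → α) (Z : Set α) : Prop :=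
  ∀ j ∈ Icc 1 r, ∀ x ∈ Z, x ∈ A j → ε j ∈ Z

section Presentation

variable {M : Matroid α} {r : ℕ} {A : ℕ → Set α} {ε : ℕ → α}

theorem IsSaturated.union {X Y : Set α} (hX : IsSaturated r A ε X) (hY : IsSaturated r A ε Y) :
    IsSaturated r A ε (X ∪ Y) := by
  rintro j hj x (hx | hx) hxA
  exacts [Or.inl (hX j hj x hx hxA), Or.inr (hY j hj x hx hxA)]

theorem IsSaturated.inter {X Y : Set α} (hX : IsSaturated r A ε X) (hY : IsSaturated r A ε Y) :
    IsSaturated r A ε (X ∩ Y) :=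
  fun j hj x hx hxA => ⟨hX j hj x hx.1 hxA, hY j hj x hx.2 hxA⟩

theorem IsPresentation.indep_of_subset_image (hA : IsPresentation M r A)
    (hεA : ∀ i ∈ Icc 1 r, ε i ∈ A i) {S : Set α} (hS : S ⊆ ε '' Icc 1 r) : M.Indep S := by
  refine (hA.2 S).2 ⟨fun x hx => ?_, Function.invFunOn ε (Icc 1 r),
    (Function.invFunOn_injOn_image ε _).mono hS, fun x hx => ?_⟩
  · obtain ⟨i, hi, rfl⟩ := hS hx
    exact hA.1 i hi (hεA i hi)
  · have hmem := Function.invFunOn_mem (hS hx)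
    refine ⟨hmem, ?_⟩
    simpa only [Function.invFunOn_eq (hS hx)] using hεA _ hmem

theorem matching_apply_private
    (hεpriv : ∀ i ∈ Icc 1 r, ∀ j ∈ Icc 1 r, j ≠ i → ε i ∉ A j) {φ : α → ℕ} {I : Set α}
    (hφ : ∀ x ∈ I, φ x ∈ Icc 1 r ∧ x ∈ A (φ x)) {i : ℕ} (hi : i ∈ Icc 1 r) (hεi : ε i ∈ I) :
    φ (ε i) = i := by
  by_contra hne
  exact hεpriv i hi _ (hφ _ hεi).1 hne (hφ _ hεi).2

theorem IsPresentation.indep_insert_of_indep_insert_private (hA : IsPresentation M r A)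
    (hεpriv : ∀ i ∈ Icc 1 r, ∀ j ∈ Icc 1 r, j ≠ i → ε i ∉ A j) {I : Set α} {j : ℕ} {x : α}
    (hj : j ∈ Icc 1 r) (hεI : ε j ∉ I) (hind : M.Indep (insert (ε j) I)) (hx : x ∈ A j) :
    M.Indep (insert x I) := by
  classical
  by_cases hxI : x ∈ I
  · rw [insert_eq_of_mem hxI]
    exact hind.subset (subset_insert _ _)
  obtain ⟨-, ψ, hψinj, hψ⟩ := (hA.2 _).1 hind
  have hψj : ψ (ε j) = j := matching_apply_private hεpriv hψ hj (mem_insert _ _)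
  have hagree : EqOn (Function.update ψ x j) ψ I :=
    fun y hy => Function.update_of_ne (ne_of_mem_of_not_mem hy hxI) _ _
  refine (hA.2 _).2 ⟨insert_subset (hA.1 j hj hx) ((subset_insert _ _).trans hind.subset_ground),
    Function.update ψ x j, ?_, ?_⟩
  · rw [injOn_insert hxI, Function.update_self, hagree.image_eq]
    refine ⟨(hψinj.mono (subset_insert _ _)).congr hagree.symm, ?_⟩
    rintro ⟨y, hy, hyj⟩
    have hyε : y = ε j := hψinj (mem_insert_of_mem _ hy) (mem_insert _ _) (hyj.trans hψj.symm)
    exact hεI (hyε ▸ hy)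
  · rintro y (rfl | hy)
    · simpa only [Function.update_self] using ⟨hj, hx⟩
    · rw [hagree hy]
      exact hψ y (mem_insert_of_mem _ hy)

theorem CyclicFlat.isSaturated (hA : IsPresentation M r A) (hεA : ∀ i ∈ Icc 1 r, ε i ∈ A i)
    (hεpriv : ∀ i ∈ Icc 1 r, ∀ j ∈ Icc 1 r, j ≠ i → ε i ∉ A j) {F : Set α}
    (hF : CyclicFlat M F) : IsSaturated r A ε F := by
  intro j hj x hx hxA
  obtain ⟨B, hB, hxB⟩ := hF.exists_isBasis_notMem hx
  have hclB : M.closure B = F := by rw [hB.closure_eq_closure, hF.1.closure]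
  by_contra hεF
  have hεB : ε j ∉ B := fun h => hεF (hB.subset h)
  have hind : M.Indep (insert (ε j) B) := (hB.indep.insert_indep_iff_of_notMem hεB).2
    ⟨hA.1 j hj (hεA j hj), hclB ▸ hεF⟩
  exact (hB.insert_dep ⟨hx, hxB⟩).not_indep
    (hA.indep_insert_of_indep_insert_private hεpriv hj hεB hind hxA)

theorem IsSaturated.isBasis_inter_image (hA : IsPresentation M r A)
    (hεA : ∀ i ∈ Icc 1 r, ε i ∈ A i)
    (hεpriv : ∀ i ∈ Icc 1 r, ∀ j ∈ Icc 1 r, j ≠ i → ε i ∉ A j) {Z : Set α}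
    (hZ : IsSaturated r A ε Z) (hZE : Z ⊆ M.E) : M.IsBasis (Z ∩ ε '' Icc 1 r) Z := by
  have hindB := hA.indep_of_subset_image hεA (inter_subset_right (s := Z))
  refine hindB.isBasis_of_subset_of_subset_closure inter_subset_left fun x hxZ => ?_
  by_contra hxcl
  have hxB : x ∉ Z ∩ ε '' Icc 1 r := fun h => hxcl (M.subset_closure _ hindB.subset_ground h)
  obtain ⟨-, φ, hφinj, hφ⟩ :=
    (hA.2 _).1 ((hindB.insert_indep_iff_of_notMem hxB).2 ⟨hZE hxZ, hxcl⟩)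
  obtain ⟨hj, hxA⟩ := hφ x (mem_insert _ _)
  have hεZ : ε (φ x) ∈ Z ∩ ε '' Icc 1 r := ⟨hZ _ hj x hxZ hxA, mem_image_of_mem ε hj⟩
  have hεx : ε (φ x) = x := hφinj (mem_insert_of_mem _ hεZ) (mem_insert _ _)
    (matching_apply_private hεpriv hφ hj (mem_insert_of_mem _ hεZ))
  exact hxB (hεx ▸ hεZ)

theorem IsSaturated.modularPair (hA : IsPresentation M r A) (hεA : ∀ i ∈ Icc 1 r, ε i ∈ A i)
    (hεpriv : ∀ i ∈ Icc 1 r, ∀ j ∈ Icc 1 r, j ≠ i → ε i ∉ A j) {X Y : Set α}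
    (hX : IsSaturated r A ε X) (hY : IsSaturated r A ε Y) (hXE : X ⊆ M.E) (hYE : Y ⊆ M.E) :
    ModularPair M X Y := by
  have hfin : ∀ Z : Set α, (Z ∩ ε '' Icc 1 r).Finite :=
    fun Z => ((finite_Icc 1 r).image ε).subset inter_subset_right
  have hrnk : ∀ Z, IsSaturated r A ε Z → Z ⊆ M.E → rnk M Z = (Z ∩ ε '' Icc 1 r).ncard :=
    fun Z hZ hZE => rnk_eq_ncard_of_isBasis' (hZ.isBasis_inter_image hA hεA hεpriv hZE).isBasis'
      (hfin Z)
  rw [ModularPair, hrnk X hX hXE, hrnk Y hY hYE, hrnk _ (hX.union hY) (union_subset hXE hYE),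
    hrnk _ (hX.inter hY) (inter_subset_left.trans hXE), union_inter_distrib_right,
    inter_inter_distrib_right]
  exact (ncard_union_add_ncard_inter _ _ (hfin X) (hfin Y)).symm

end Presentation

theorem statement14_general (M : Matroid α) (h : IsFundamental M) :
    ∀ X Y : Set α, CyclicFlat M X → CyclicFlat M Y → ModularPair M X Y := by
  intro X Y hX hY
  rcases isEmpty_or_nonempty α with hα | hα
  · simp only [ModularPair, eq_empty_of_isEmpty]
  obtain ⟨r, A, hA, hfund⟩ := h
  choose! ε hεA hεpriv using hfund
  exact (hX.isSaturated hA hεA hεpriv).modularPair hA hεA hεpriv (hY.isSaturated hA hεA hεpriv)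
    hX.1.subset_ground hY.1.subset_ground

theorem statement14 (M : Matroid α) [M.Finite] (h : IsFundamental M) :
    ∀ X Y : Set α, CyclicFlat M X → CyclicFlat M Y → ModularPair M X Y :=
  statement14_general M h

end Paper
end
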